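/- Let g : ℝ → ℝ be seven times differentiable (in particular C³). Define y(x) = g(x) + Σ_{k=1}^{8} β_k(x)·c_k, where c₁ = y_i − g(0), c₂ = y_f − g(1), c₃ = y′_i − g′(0), c₄ = y′_f − g′(1), c₅ = y″_i − g″(0), c₆ = y″_f − g″(1), c₇ = y‴_i − g‴(0), c₈ = y‴_f − g‴(1), and β₁,…,β₈ are the switching polynomials on [0,1] given by β₁(x)=20x⁷−70x⁶+84x⁵−35x⁴+1, β₂(x)=−20x⁷+70x⁶−84x⁵+35x⁴, β₃(x)=10x⁷−36x⁶+45x⁵−20x⁴+x, β₄(x)=10x⁷−34x⁶+39x⁵−15x⁴, β₅(x)=2x⁷−(15/2)x⁶+10x⁵−5x⁴+x²/2, β₆(x)=−2x⁷+(13/2)x⁶−7x⁵+(5/2)x⁴, β₇(x)=x⁷/6−2x⁶/3+x⁵−2x⁴/3+x³/6, β₈(x)=x⁷/6−x⁶/2+x⁵/2−x⁴/6. Then y(0) = y_i, y(1) = y_f, y′(0) = y′_i, y′(1) = y′_f, y″(0) = y″_i, y″(1) = y″_f, y‴(0) = y‴_i, and y‴(1) = y‴_f. -/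

import Mathlib

/-!
Number the eight constraints so that constraint `i` prescribes the derivative of order `i / 2`
at the endpoint `i % 2`, and call the corresponding functional `L i`. On `C³` functions every
`L i` is linear, and the switching polynomials are the polynomials of degree at most seven with
`L i β_k = δ_ik`: their coefficient matrix is the inverse of the matrix `(L i (x ↦ xᵐ))ᵢₘ`.
Hence `L i y = L i g + c_i`, which is the prescribed value.
-/

open Finset Matrix

theorem iteratedDeriv_fun_sum_mul_pow {𝕜 : Type*} [NontriviallyNormedField 𝕜] {N : ℕ}
    (a : Fin N → 𝕜) (n : ℕ) (x : 𝕜) :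
    iteratedDeriv n (fun t => ∑ m, a m * t ^ (m : ℕ)) x =
      ∑ m, a m * ((m : ℕ).descFactorial n * x ^ ((m : ℕ) - n)) := by
  rw [iteratedDeriv_fun_sum fun m _ => by fun_prop]
  simp only [iteratedDeriv_const_mul_field, iteratedDeriv_pow]

theorem iteratedDeriv_add_sum_mul_const {𝕜 ι : Type*} [NontriviallyNormedField 𝕜] {n : ℕ} {x : 𝕜}
    {g : 𝕜 → 𝕜} {β : ι → 𝕜 → 𝕜} (s : Finset ι) (c : ι → 𝕜)
    (hg : ContDiffAt 𝕜 n g x) (hβ : ∀ k ∈ s, ContDiffAt 𝕜 n (β k) x) :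
    iteratedDeriv n (fun t => g t + ∑ k ∈ s, β k t * c k) x =
      iteratedDeriv n g x + ∑ k ∈ s, iteratedDeriv n (β k) x * c k := by
  have hβc : ∀ k ∈ s, ContDiffAt 𝕜 n (fun t => β k t * c k) x :=
    fun k hk => (hβ k hk).mul contDiffAt_const
  rw [iteratedDeriv_fun_add hg (.sum hβc), iteratedDeriv_fun_sum hβc]
  simp only [iteratedDeriv_mul_const_field]

noncomputable def boundaryDatum (i : Fin 8) (f : ℝ → ℝ) : ℝ :=
  iteratedDeriv (i / 2) f (i % 2 : ℕ)

-- Entry `(i, m)` is `boundaryDatum i (· ^ m)`, computed with `iteratedDeriv_pow`.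
def monomialBoundaryMatrix : Matrix (Fin 8) (Fin 8) ℝ :=
  Matrix.of fun i m => (m : ℕ).descFactorial (i / 2) * ((i % 2 : ℕ) : ℝ) ^ ((m : ℕ) - i / 2)

-- Row `k` lists the coefficients of `β_{k+1}` in the monomials `1, x, …, x⁷`.
noncomputable def switchingCoeff : Matrix (Fin 8) (Fin 8) ℝ :=
  !![1, 0, 0, 0, -35, 84, -70, 20;
     0, 0, 0, 0, 35, -84, 70, -20;
     0, 1, 0, 0, -20, 45, -36, 10;
     0, 0, 0, 0, -15, 39, -34, 10;
     0, 0, 1/2, 0, -5, 10, -15/2, 2;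
     0, 0, 0, 0, 5/2, -7, 13/2, -2;
     0, 0, 0, 1/6, -2/3, 1, -2/3, 1/6;
     0, 0, 0, 0, -1/6, 1/2, -1/2, 1/6]

theorem monomialBoundaryMatrix_mul_transpose_switchingCoeff :
    monomialBoundaryMatrix * switchingCoeffᵀ = 1 := by
  ext i k
  simp only [mul_apply, Fin.sum_univ_eight, monomialBoundaryMatrix, transpose_apply, of_apply]
  fin_cases i <;> fin_cases k <;>
    simp [switchingCoeff, one_apply, Nat.descFactorial] <;> norm_num

noncomputable def switchingPolynomial (k : Fin 8) : ℝ → ℝ :=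
  fun x => ∑ m : Fin 8, switchingCoeff k m * x ^ (m : ℕ)

theorem boundaryDatum_switchingPolynomial (i k : Fin 8) :
    boundaryDatum i (switchingPolynomial k) = if i = k then 1 else 0 := by
  have h := congr_fun₂ monomialBoundaryMatrix_mul_transpose_switchingCoeff i k
  rw [mul_apply, one_apply] at h
  unfold boundaryDatum switchingPolynomial
  rw [← h, iteratedDeriv_fun_sum_mul_pow]
  simp only [monomialBoundaryMatrix, transpose_apply, of_apply, mul_comm]

theorem boundaryDatum_add_sum_switchingPolynomial_mul {g : ℝ → ℝ} (hg : ContDiff ℝ 3 g)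
    (c : Fin 8 → ℝ) (i : Fin 8) :
    boundaryDatum i (fun t => g t + ∑ k, switchingPolynomial k t * c k) =
      boundaryDatum i g + c i := by
  have hi : ((i / 2 : ℕ) : WithTop ℕ∞) ≤ 3 := by exact_mod_cast (by omega : (i : ℕ) / 2 ≤ 3)
  have hβ := boundaryDatum_switchingPolynomial i
  simp only [boundaryDatum] at hβ ⊢
  rw [iteratedDeriv_add_sum_mul_const _ _ (hg.contDiffAt.of_le hi)
    fun k _ => by unfold switchingPolynomial; fun_prop]
  simp only [hβ, ite_mul, one_mul, zero_mul, sum_ite_eq, mem_univ, if_true]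

theorem tfc_constrained_expression_satisfies_bvp_constraints
    (g : ℝ → ℝ) (hg : ContDiff ℝ 7 g)
    (yi yf yi' yf' yi'' yf'' yi''' yf''' : ℝ) :
    let β₁ : ℝ → ℝ := fun x => 20*x^7 - 70*x^6 + 84*x^5 - 35*x^4 + 1
    let β₂ : ℝ → ℝ := fun x => -20*x^7 + 70*x^6 - 84*x^5 + 35*x^4
    let β₃ : ℝ → ℝ := fun x => 10*x^7 - 36*x^6 + 45*x^5 - 20*x^4 + x
    let β₄ : ℝ → ℝ := fun x => 10*x^7 - 34*x^6 + 39*x^5 - 15*x^4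
    let β₅ : ℝ → ℝ := fun x => 2*x^7 - (15/2)*x^6 + 10*x^5 - 5*x^4 + x^2/2
    let β₆ : ℝ → ℝ := fun x => -2*x^7 + (13/2)*x^6 - 7*x^5 + (5/2)*x^4
    let β₇ : ℝ → ℝ := fun x => x^7/6 - 2*x^6/3 + x^5 - 2*x^4/3 + x^3/6
    let β₈ : ℝ → ℝ := fun x => x^7/6 - x^6/2 + x^5/2 - x^4/6
    let y : ℝ → ℝ := fun x =>
      g x + β₁ x * (yi - g 0) + β₂ x * (yf - g 1)
          + β₃ x * (yi' - deriv g 0) + β₄ x * (yf' - deriv g 1)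
          + β₅ x * (yi'' - iteratedDeriv 2 g 0) + β₆ x * (yf'' - iteratedDeriv 2 g 1)
          + β₇ x * (yi''' - iteratedDeriv 3 g 0) + β₈ x * (yf''' - iteratedDeriv 3 g 1)
    y 0 = yi ∧ y 1 = yf ∧
    deriv y 0 = yi' ∧ deriv y 1 = yf' ∧
    iteratedDeriv 2 y 0 = yi'' ∧ iteratedDeriv 2 y 1 = yf'' ∧
    iteratedDeriv 3 y 0 = yi''' ∧ iteratedDeriv 3 y 1 = yf''' := by
  intro β₁ β₂ β₃ β₄ β₅ β₆ β₇ β₈ y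
  let target : Fin 8 → ℝ := ![yi, yf, yi', yf', yi'', yf'', yi''', yf''']
  have hy : y = fun t => g t + ∑ k, switchingPolynomial k t * (target k - boundaryDatum k g) := by
    funext t
    simp only [y, β₁, β₂, β₃, β₄, β₅, β₆, β₇, β₈, target, switchingPolynomial, switchingCoeff,
      boundaryDatum, Fin.sum_univ_eight, of_apply, Matrix.cons_val, Fin.isValue,
      Fin.coe_ofNat_eq_mod, Nat.reduceMod, Nat.reduceDiv, Nat.cast_zero, Nat.cast_one,
      iteratedDeriv_zero, iteratedDeriv_one]
    ring
  have key (i : Fin 8) : boundaryDatum i y = target i := by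
    rw [hy, boundaryDatum_add_sum_switchingPolynomial_mul (hg.of_le (by norm_num))]
    ring
  simpa [Fin.forall_fin_succ, boundaryDatum, target] using key
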